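/- The number of boxes of a partition λ with first-column hook length set A equals the number of pairs (a,b) ∈ ℕ² with a > b, a ∈ A, and b ∉ A, which in turn equals sum(A) − C(|A|,2). -/

import Mathlib

inductive Letter | S | T
deriving DecidableEq, Repr

open Letter

/-- Number of occurrences of `u` as a (not necessarily contiguous) subsequence of `w`. -/
def cnt (u w : List Letter) : ℕ := w.sublists.count u


/-- A partition given by its (weakly decreasing, positive) list of row lengths. -/
def IsPartitionL (l : List ℕ) : Prop := l.Pairwise (· ≥ ·) ∧ ∀ x ∈ l, 0 < x

/-- Hook length of the box in row `i`, column `j` (both 0-indexed). -/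
def hook (l : List ℕ) (i j : ℕ) : ℕ :=
  (l.getD i 0 - j) + (l.drop (i+1)).countP (fun r => decide (j < r))

/-- `l` is a `p`-core partition: no hook length equals `p`. -/
def IsCore (p : ℕ) (l : List ℕ) : Prop :=
  ∀ i j, i < l.length → j < l.getD i 0 → hook l i j ≠ p

/-- The set of first-column hook lengths of `l`. -/
def fch (l : List ℕ) : Finset ℕ :=
  Finset.image (fun i => l.getD i 0 + (l.length - 1 - i)) (Finset.range l.length)

/-! The first-column hook lengths `λᵢ + (n - 1 - i)` of a partition with `n` rows are strictly
decreasing in `i`, so `A` has `n` elements and `∑ A = |λ| + C(n, 2)`. On the other hand, for any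
finite `A ⊆ ℕ` the pairs `b < a` with `a ∈ A` number `∑ A`, and those among them with `b ∈ A`
number `C(|A|, 2)`; the remaining ones are the pairs of the statement. -/

open Finset

namespace Finset

theorem card_filter_product {α β : Type*} (s : Finset α) (t : Finset β) (p : α × β → Prop)
    [DecidablePred p] : #{x ∈ s ×ˢ t | p x} = ∑ a ∈ s, #{b ∈ t | p (a, b)} := by
  simp only [card_filter, sum_product]

variable (A : Finset ℕ) {M : ℕ}

theorem card_filter_product_range_lt (hM : ∀ a ∈ A, a ≤ M) :
    #{x ∈ A ×ˢ range M | x.2 < x.1} = ∑ a ∈ A, a := by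
  rw [card_filter_product]
  refine sum_congr rfl fun a ha => ?_
  rw [range_eq_Ico, Ico_filter_lt, min_eq_right (hM a ha), Nat.card_Ico, Nat.sub_zero]

theorem card_filter_product_range_lt_mem (hM : ∀ a ∈ A, a ≤ M) :
    #{x ∈ A ×ˢ range M | x.2 < x.1 ∧ x.2 ∈ A} = (#A).choose 2 := by
  rw [← card_product_filter_lt (s := A)]
  refine card_equiv (Equiv.prodComm ℕ ℕ) fun ⟨a, b⟩ => ?_
  simp only [mem_filter, mem_product, mem_range, Equiv.prodComm_apply, Prod.fst_swap,
    Prod.snd_swap]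
  have := hM a
  grind

theorem natCard_pairs_lt_mem_notMem_add_choose_two :
    Nat.card {p : ℕ × ℕ // p.2 < p.1 ∧ p.1 ∈ A ∧ p.2 ∉ A} + (#A).choose 2 = ∑ a ∈ A, a := by
  have hM : ∀ a ∈ A, a ≤ A.sup id := fun a ha => le_sup (f := id) ha
  have hpairs : Nat.card {p : ℕ × ℕ // p.2 < p.1 ∧ p.1 ∈ A ∧ p.2 ∉ A} =
      #{x ∈ A ×ˢ range (A.sup id) | x.2 < x.1 ∧ x.2 ∉ A} := by
    rw [← Nat.card_eq_finsetCard]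
    refine Nat.card_congr (Equiv.subtypeEquivRight fun ⟨a, b⟩ => ?_)
    simp only [mem_filter, mem_product, mem_range]
    have := hM a
    grind
  rw [hpairs, ← card_filter_product_range_lt_mem A hM, ← card_filter_product_range_lt A hM,
    ← filter_filter, ← filter_filter, add_comm, card_filter_add_card_filter_not]

end Finset

theorem List.sum_range_getD {M : Type*} [AddCommMonoid M] (l : List M) :
    ∑ i ∈ Finset.range l.length, l.getD i 0 = l.sum := by
  rw [Finset.sum_range, ← Fin.sum_univ_getElem]
  simp only [Fin.is_lt, List.getD_eq_getElem]

theorem List.Pairwise.strictAntiOn_getD_add_length_sub {l : List ℕ} (hl : l.Pairwise (· ≥ ·)) :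
    StrictAntiOn (fun i => l.getD i 0 + (l.length - 1 - i)) (Set.Iio l.length) := by
  intro i hi j hj hij
  have := hl.rel_get_of_le (a := ⟨i, hi⟩) (b := ⟨j, hj⟩) hij.le
  simp only [Set.mem_Iio, List.get_eq_getElem] at hi hj this
  simp only [List.getD_eq_getElem _ _ hi, List.getD_eq_getElem _ _ hj]
  omega

theorem card_fch {l : List ℕ} (hl : l.Pairwise (· ≥ ·)) : #(fch l) = l.length := by
  rw [fch, card_image_of_injOn, card_range]
  simpa only [coe_range] using hl.strictAntiOn_getD_add_length_sub.injOn

theorem sum_fch {l : List ℕ} (hl : l.Pairwise (· ≥ ·)) :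
    ∑ a ∈ fch l, a = l.sum + l.length.choose 2 := by
  rw [fch, sum_image, sum_add_distrib, List.sum_range_getD, sum_range_reflect (fun i => i),
    sum_range_id, Nat.choose_two_right]
  simpa only [coe_range] using hl.strictAntiOn_getD_add_length_sub.injOn

theorem stmt17 (l : List ℕ) (hl : IsPartitionL l) (A : Finset ℕ) (hA : A = fch l) :
    l.sum = Nat.card {p : ℕ × ℕ // p.2 < p.1 ∧ p.1 ∈ A ∧ p.2 ∉ A} ∧
      l.sum = (∑ a ∈ A, a) - A.card.choose 2 := by
  subst hA
  have hpairs := natCard_pairs_lt_mem_notMem_add_choose_two (fch l)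
  have hsum := sum_fch hl.1
  rw [card_fch hl.1] at hpairs ⊢
  omega
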